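/- arXiv:2604.14425 — 9 statements merged into one kernel-verified Lean document; each statement's English description precedes it below -/
import Mathlib

section
/- Let J be a nilpotent Jordan superalgebra over ℂ of type (4,1), i.e. dim J₀ = 4 and dim J₁ = 1. Then J₀·J₁ = 0 and J₁·J₁ = 0; in particular the multiplication of J is completely determined by the multiplication of the 4-dimensional nilpotent Jordan algebra J₀. -/
noncomputable section

/-- The underlying ℤ/2-graded vector space of type `(m,n)`: even part `Fin m → ℂ`,
odd part `Fin n → ℂ`. -/
abbrev GV (m n : ℕ) : Type := (Fin m → ℂ) × (Fin n → ℂ)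

/-- A superalgebra structure tensor of type `(m,n)`: structure constants
`c i j k` (even·even), `ρ i j k` (even·odd) and `Γ i j k` (odd·odd). -/
abbrev Tensor (m n : ℕ) : Type :=
  (Fin m → Fin m → Fin m → ℂ) × (Fin m → Fin n → Fin n → ℂ) × (Fin n → Fin n → Fin m → ℂ)

/-- The ℤ/2-graded multiplication on `GV m n` determined by a structure tensor. -/
def mulOf {m n : ℕ} (μ : Tensor m n) (x y : GV m n) : GV m n :=
  (fun k => (∑ i, ∑ j, x.1 i * y.1 j * μ.1 i j k) + ∑ i, ∑ j, x.2 i * y.2 j * μ.2.2 i j k,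
   fun k => (∑ i, ∑ j, x.1 i * y.2 j * μ.2.1 i j k) + ∑ i, ∑ j, y.1 i * x.2 j * μ.2.1 i j k)

/-- `x` is homogeneous of parity `p` (`p = 0`: even, `p = 1`: odd). -/
def IsHom {m n : ℕ} (p : ℕ) (x : GV m n) : Prop :=
  (p = 0 ∧ x.2 = 0) ∨ (p = 1 ∧ x.1 = 0)

/-- The sign `(-1)^k`. -/
def sgn (k : ℕ) : ℂ := (-1 : ℂ) ^ k

/-- The super-Jordan expression `J^s(w; x, y, z)` for homogeneous elements of
parities `pw, px, py, pz`. -/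
def superJ {m n : ℕ} (μ : Tensor m n) (pw px py pz : ℕ) (w x y z : GV m n) : GV m n :=
  mulOf μ (mulOf μ w x) (mulOf μ y z)
    + sgn (px * py) • mulOf μ (mulOf μ w y) (mulOf μ x z)
    + sgn ((px + py) * pz) • mulOf μ (mulOf μ w z) (mulOf μ x y)
    - sgn (pw * px) • mulOf μ x (mulOf μ w (mulOf μ y z))
    - sgn (py * (pw + px)) • mulOf μ y (mulOf μ w (mulOf μ x z))
    - sgn (pz * (pw + px + py)) • mulOf μ z (mulOf μ w (mulOf μ x y))

/-- `μ` is a Jordan superalgebra structure: supercommutativity and the Jordan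
superidentity hold for all homogeneous elements. -/
def IsJordanSuper {m n : ℕ} (μ : Tensor m n) : Prop :=
  (∀ (px py : ℕ) (x y : GV m n), IsHom px x → IsHom py y →
      mulOf μ x y = sgn (px * py) • mulOf μ y x) ∧
  (∀ (pw px py pz : ℕ) (w x y z : GV m n),
      IsHom pw w → IsHom px x → IsHom py y → IsHom pz z →
      superJ μ pw px py pz w x y z = 0)

/-- The product of two graded subspaces: the span of all products. -/
def mulSub {m n : ℕ} (μ : Tensor m n) (A B : Submodule ℂ (GV m n)) : Submodule ℂ (GV m n) :=
  Submodule.span ℂ {z | ∃ a ∈ A, ∃ b ∈ B, z = mulOf μ a b}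

/-- The powers `J^k`: `J^1 = J` and `J^{k+1} = Σ_{i=1}^{k} J^i · J^{k+1-i}`. -/
def powT {m n : ℕ} (μ : Tensor m n) : ℕ → Submodule ℂ (GV m n)
  | 0 => ⊤
  | 1 => ⊤
  | (k + 2) => ⨆ i : Fin (k + 1), mulSub μ (powT μ ((i : ℕ) + 1)) (powT μ (k + 1 - (i : ℕ)))
  decreasing_by
  · have := i.isLt; omega
  · omega

/-- `μ` is nilpotent: some power vanishes. -/
def IsNilpotentT {m n : ℕ} (μ : Tensor m n) : Prop :=
  ∃ k : ℕ, 1 ≤ k ∧ powT μ k = ⊥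

/-- A grading-preserving algebra isomorphism between the superalgebras determined
by `μ` and `μ'`. -/
def Iso {m n : ℕ} (μ μ' : Tensor m n) : Prop :=
  ∃ (T : (Fin m → ℂ) ≃ₗ[ℂ] (Fin m → ℂ)) (S : (Fin n → ℂ) ≃ₗ[ℂ] (Fin n → ℂ)),
    ∀ x y : GV m n,
      (T ((mulOf μ x y).1), S ((mulOf μ x y).2)) = mulOf μ' (T x.1, S x.2) (T y.1, S y.2)

/-- `μ` degenerates to `μ'`: `μ'` lies in the closure of the orbit of `μ` under
base change (in the standard topology). -/
def degenerates {m n : ℕ} (μ μ' : Tensor m n) : Prop :=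
  μ' ∈ closure {ν : Tensor m n | Iso μ ν}

/-- Standard even basis vector `e_i`. -/
def eps {m n : ℕ} (i : Fin m) : GV m n := (Pi.single i 1, 0)

/-- Standard odd basis vector `f_j`. -/
def ph {m n : ℕ} (j : Fin n) : GV m n := (0, Pi.single j 1)


/-!
Since `J₁` is spanned by one vector `f`, supercommutativity gives `f f = -f f`, so `J₁ J₁ = 0`.
For an even `e` we then have `e f = c f`; if `c ≠ 0`, the vector `f = (c⁻¹ e) f` lies in
`J · J^k ⊆ J^{k+1}` for every `k`, contradicting nilpotency, so `J₀ J₁ = 0` as well.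
-/

lemma IsJordanSuper.oddMul_eq_zero {m : ℕ} {μ : Tensor m 1} (hJ : IsJordanSuper μ) :
    μ.2.2 = 0 := by
  funext i j k
  have hsq : μ.2.2 0 0 k = -μ.2.2 0 0 k := by
    simpa [mulOf, ph, sgn] using congrArg (fun z : GV m 1 => z.1 k)
      (hJ.1 1 1 (ph 0) (ph 0) (Or.inr ⟨rfl, rfl⟩) (Or.inr ⟨rfl, rfl⟩))
  rw [Subsingleton.elim i 0, Subsingleton.elim j 0]
  exact CharZero.eq_neg_self_iff.mp hsq

lemma mem_powT_of_mulOf_eq_self {m n : ℕ} {μ : Tensor m n} {a x : GV m n}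
    (hx : mulOf μ a x = x) (k : ℕ) : x ∈ powT μ k := by
  induction k using Nat.strong_induction_on with
  | _ k IH =>
    match k with
    | 0 => simp [powT]
    | 1 => simp [powT]
    | k + 2 =>
      rw [powT]
      refine Submodule.mem_iSup_of_mem (⟨0, k.succ_pos⟩ : Fin (k + 1)) (Submodule.subset_span ?_)
      exact ⟨a, by simp [powT], x, IH (k + 1) (by omega), hx.symm⟩

lemma IsNilpotentT.eq_zero_of_mulOf_eq_self {m n : ℕ} {μ : Tensor m n} (hN : IsNilpotentT μ)
    {a x : GV m n} (hx : mulOf μ a x = x) : x = 0 := by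
  obtain ⟨k, -, hk⟩ := hN
  simpa [hk] using mem_powT_of_mulOf_eq_self hx k

lemma IsNilpotentT.evenOddMul_eq_zero {m : ℕ} {μ : Tensor m 1} (hN : IsNilpotentT μ) :
    μ.2.1 = 0 := by
  funext i j k
  rw [Subsingleton.elim j 0, Subsingleton.elim k 0]
  by_contra hc
  have hf : mulOf μ (((μ.2.1 i 0 0)⁻¹ • Pi.single i 1 : Fin m → ℂ), 0) (ph 0) = ph 0 := by
    refine Prod.ext (funext fun _ => by simp [mulOf, ph]) (funext fun l => ?_)
    simp [mulOf, ph, Pi.single_apply, Subsingleton.elim l 0, inv_mul_cancel₀ hc]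
  simpa [ph] using congrArg (fun z : GV m 1 => z.2 0) (hN.eq_zero_of_mulOf_eq_self hf)

/-- For a nilpotent Jordan superalgebra of type (4,1), the even·odd and
odd·odd products vanish, so the multiplication is determined by that of the even part. -/
theorem stmt0 (μ : Tensor 4 1) (hJ : IsJordanSuper μ) (hN : IsNilpotentT μ) :
    (∀ (a : Fin 4 → ℂ) (u : Fin 1 → ℂ), mulOf μ (a, 0) (0, u) = 0) ∧
    (∀ u v : Fin 1 → ℂ, mulOf μ (0, u) (0, v) = 0) ∧
    (∀ x y : GV 4 1, mulOf μ x y = ((mulOf μ (x.1, 0) (y.1, 0)).1, 0)) := by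
  have hρ := hN.evenOddMul_eq_zero
  have hΓ := hJ.oddMul_eq_zero
  refine ⟨fun a u => ?_, fun u v => ?_, fun x y => ?_⟩ <;> ext <;> simp [mulOf, hρ, hΓ]

end
end

section
/- For λ ∈ ℂ∖{0}, let J^λ be the Jordan superalgebra over ℂ of type (2,3) with homogeneous basis {e₁, e₂; f₁, f₂, f₃} (e_i even, f_j odd) and nonzero products e₁² = e₂, e₁f₂ = f₂e₁ = f₁, f₁f₃ = −f₃f₁ = λe₂, f₂f₃ = −f₃f₂ = e₁ (all other products of basis vectors zero). Then for λ₁, λ₂ ∈ ℂ∖{0}, the superalgebras J^{λ₁} and J^{λ₂} are isomorphic via a grading-preserving algebra isomorphism if and only if λ₁ = λ₂. -/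
/-!
An isomorphism `J^λ → J^λ'` sends `e₁` to a vector with some `e₁`-coordinate `a`, and then
`e₂ = e₁²` to `a² e₂`, so `a ≠ 0`. Transporting `e₁f₃ = 0`, `e₁f₂ = f₁` and `f₂f₃ = e₁` pins down
enough coordinates of the images of the `fᵢ` to evaluate the image of `f₁f₃ = λ e₂` as `λ' a² e₂`,
while it must also be `λ a² e₂`.
-/

noncomputable section

/-- A tensor of type (2,3) with products `e₁² = a·e₂`, `e₁f_j = Σ_k R1 j k f_k`,
`e₂f_j = Σ_k R2 j k f_k` and `f_if_j = W i j · e₁ + Θ i j · e₂`. -/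
def T23 (a : ℂ) (R1 R2 W Θ : Fin 3 → Fin 3 → ℂ) : Tensor 2 3 :=
  (fun i j k => if i = 0 ∧ j = 0 ∧ k = 1 then a else 0,
   fun i => if i = 0 then R1 else R2,
   fun i j k => if k = 0 then W i j else Θ i j)

/-- `e·f₂ = f₁`. -/
def P21 : Fin 3 → Fin 3 → ℂ := ![![0,0,0], ![1,0,0], ![0,0,0]]
/-- `e·f₃ = f₂`. -/
def P32 : Fin 3 → Fin 3 → ℂ := ![![0,0,0], ![0,0,0], ![0,1,0]]
/-- `e·f₃ = f₁`. -/
def P31 : Fin 3 → Fin 3 → ℂ := ![![0,0,0], ![0,0,0], ![1,0,0]]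
/-- `e·f₂ = f₃`. -/
def P23 : Fin 3 → Fin 3 → ℂ := ![![0,0,0], ![0,0,1], ![0,0,0]]
/-- `f₁f₂ = e`. -/
def W12 : Fin 3 → Fin 3 → ℂ := ![![0,1,0], ![-1,0,0], ![0,0,0]]
/-- `f₁f₃ = e`. -/
def W13 : Fin 3 → Fin 3 → ℂ := ![![0,0,1], ![0,0,0], ![-1,0,0]]
/-- `f₂f₃ = e`. -/
def W23 : Fin 3 → Fin 3 → ℂ := ![![0,0,0], ![0,0,1], ![0,-1,0]]

/-- The family `(2,3)₃₁^λ`: `e₁² = e₂`, `e₁f₂ = f₁`, `f₁f₃ = λe₂`, `f₂f₃ = e₁`. -/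
def A31 (l : ℂ) : Tensor 2 3 := T23 1 P21 0 W23 (l • W13)

/-- The family `(2,3)₄₃^γ`: `e₁² = e₂`, `e₁f₂ = f₃`, `e₁f₃ = γf₁`, `e₂f₂ = f₁`. -/
def A43 (g : ℂ) : Tensor 2 3 := T23 1 (P23 + g • P31) P21 0 0

/-- The family `(2,3)₄₄^φ`: `e₁² = e₂`, `e₁f₂ = f₃`, `e₁f₃ = φf₁`, `e₂f₂ = f₁`,
`f₂f₃ = e₂`. -/
def A44 (p : ℂ) : Tensor 2 3 := T23 1 (P23 + p • P31) P21 0 W23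

lemma Iso.refl {m n : ℕ} (μ : Tensor m n) : Iso μ μ :=
  ⟨LinearEquiv.refl ℂ _, LinearEquiv.refl ℂ _, fun _ _ => rfl⟩

lemma mulOf_A31 (l : ℂ) (u v : GV 2 3) :
    mulOf (A31 l) u v =
      (![u.2 1 * v.2 2 - u.2 2 * v.2 1, u.1 0 * v.1 0 + l * (u.2 0 * v.2 2 - u.2 2 * v.2 0)],
       ![u.1 0 * v.2 1 + v.1 0 * u.2 1, 0, 0]) := by
  unfold mulOf A31 T23
  refine Prod.ext (funext fun k => ?_) (funext fun k => ?_) <;> fin_cases k <;>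
    simp [Fin.sum_univ_succ, W23, W13, P21] <;> ring

-- `eps 0, eps 1` and `ph 0, ph 1, ph 2` are the paper's `e₁, e₂` and `f₁, f₂, f₃`.
section A31Table

variable (l : ℂ)

lemma A31_eps0_mul_eps0 : mulOf (A31 l) (eps 0) (eps 0) = eps 1 := by
  ext i <;> fin_cases i <;> simp [mulOf_A31, eps]

lemma A31_eps0_mul_ph1 : mulOf (A31 l) (eps 0) (ph 1) = ph 0 := by
  ext i <;> fin_cases i <;> simp [mulOf_A31, eps, ph]

lemma A31_eps0_mul_ph2 : mulOf (A31 l) (eps 0) (ph 2) = 0 := by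
  ext i <;> fin_cases i <;> simp [mulOf_A31, eps, ph]

lemma A31_ph1_mul_ph2 : mulOf (A31 l) (ph 1) (ph 2) = eps 0 := by
  ext i <;> fin_cases i <;> simp [mulOf_A31, eps, ph]

lemma A31_ph0_mul_ph2 : mulOf (A31 l) (ph 0) (ph 2) = l • eps 1 := by
  ext i <;> fin_cases i <;> simp [mulOf_A31, eps, ph]

end A31Table

theorem eq_of_iso_A31 {l l' : ℂ} (h : Iso (A31 l) (A31 l')) : l = l' := by
  obtain ⟨T, S, hTS⟩ := h
  have hmul {x y z : GV 2 3} (hz : mulOf (A31 l) x y = z) :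
      mulOf (A31 l') (T x.1, S x.2) (T y.1, S y.2) = (T z.1, S z.2) := hz ▸ (hTS x y).symm
  set a := T (Pi.single 0 1) 0
  set s : Fin 3 → Fin 3 → ℂ := fun i => S (Pi.single i 1)
  have h_e0e0 : T (Pi.single 1 1) = ![0, a * a] := by
    simpa [eps, mulOf_A31] using (congrArg Prod.fst (hmul (A31_eps0_mul_eps0 l))).symm
  have ha : a ≠ 0 := by
    intro ha
    have : T (Pi.single 1 1) = T 0 := by rw [h_e0e0, ha, map_zero]; simp
    simpa using T.injective this
  have h_e0f2 : a * s 2 1 = 0 := by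
    simpa [eps, ph, mulOf_A31] using congrFun (congrArg Prod.snd (hmul (A31_eps0_mul_ph2 l))) 0
  have h_e0f1 : s 0 = ![a * s 1 1, 0, 0] := by
    simpa [eps, ph, mulOf_A31] using (congrArg Prod.snd (hmul (A31_eps0_mul_ph1 l))).symm
  have h_f1f2 : a = s 1 1 * s 2 2 - s 1 2 * s 2 1 := by
    simpa [eps, ph, mulOf_A31] using
      (congrFun (congrArg Prod.fst (hmul (A31_ph1_mul_ph2 l))) 0).symm
  have h_f0f2 : l * (a * a) = l' * (s 0 0 * s 2 2 - s 0 2 * s 2 0) := by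
    simpa [eps, ph, mulOf_A31, h_e0e0] using
      (congrFun (congrArg Prod.fst (hmul (A31_ph0_mul_ph2 l))) 1).symm
  have hs₂₁ : s 2 1 = 0 := (mul_eq_zero.mp h_e0f2).resolve_left ha
  have hs₀₀ : s 0 0 = a * s 1 1 := congrFun h_e0f1 0
  have hs₀₂ : s 0 2 = 0 := congrFun h_e0f1 2
  have hl : l * (a * a) = l' * (a * a) := by
    linear_combination h_f0f2 + l' * s 2 2 * hs₀₀ - l' * s 2 0 * hs₀₂
      - l' * a * h_f1f2 + l' * a * s 1 2 * hs₂₁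
  exact mul_right_cancel₀ (mul_ne_zero ha ha) hl

/-- the superalgebras (2,3)₃₁^λ are isomorphic iff the parameters agree. -/
theorem stmt5 : ∀ x y : ℂ, x ≠ 0 → y ≠ 0 → (Iso (A31 x) (A31 y) ↔ x = y) := by
  intro x y _ _
  exact ⟨eq_of_iso_A31, fun h => h ▸ Iso.refl _⟩

end
end

section
/- For γ ∈ ℂ∖{0}, let J^γ be the Jordan superalgebra over ℂ of type (2,3) with homogeneous basis {e₁, e₂; f₁, f₂, f₃} (e_i even, f_j odd) and nonzero products e₁² = e₂, e₁f₂ = f₂e₁ = f₃, e₁f₃ = f₃e₁ = γf₁, e₂f₂ = f₂e₂ = f₁ (all other products of basis vectors zero). Then for γ₁, γ₂ ∈ ℂ∖{0}, the superalgebras J^{γ₁} and J^{γ₂} are isomorphic via a grading-preserving algebra isomorphism if and only if γ₁ = γ₂. -/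
noncomputable section

lemma C1 (g : ℂ) (u v : GV 2 3) : (mulOf (A43 g) u v).1 = ![0, u.1 0 * v.1 0] := by
  funext k
  fin_cases k <;>
    simp [mulOf, A43, T23, P23, P31, P21, Fin.sum_univ_succ, Matrix.cons_val_zero,
      Matrix.cons_val_one, Pi.add_apply, Pi.smul_apply, Fin.ext_iff, -Fin.val_eq_zero_iff]

lemma C2 (g : ℂ) (u v : GV 2 3) : (mulOf (A43 g) u v).2 =
    ![u.1 0 * v.2 2 * g + u.1 1 * v.2 1 + v.1 0 * u.2 2 * g + v.1 1 * u.2 1, 0,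
      u.1 0 * v.2 1 + v.1 0 * u.2 1] := by
  funext k
  fin_cases k <;>
    (simp [mulOf, A43, T23, P23, P31, P21, Fin.sum_univ_succ, Matrix.cons_val_zero,
      Matrix.cons_val_one, Pi.add_apply, Pi.smul_apply, Fin.ext_iff, -Fin.val_eq_zero_iff] <;> ring)

lemma mulExt (g : ℂ) (u v : GV 2 3) : mulOf (A43 g) u v =
    (![0, u.1 0 * v.1 0],
     ![u.1 0 * v.2 2 * g + u.1 1 * v.2 1 + v.1 0 * u.2 2 * g + v.1 1 * u.2 1, 0,
      u.1 0 * v.2 1 + v.1 0 * u.2 1]) :=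
  Prod.ext (C1 g u v) (C2 g u v)

/-- the superalgebras (2,3)₄₃^γ are isomorphic iff the parameters agree. -/
theorem stmt6 : ∀ x y : ℂ, x ≠ 0 → y ≠ 0 → (Iso (A43 x) (A43 y) ↔ x = y) := by
  intro x y hx hy
  constructor
  · rintro ⟨T, S, h⟩
    set a : ℂ := T ![1, 0] 0 with ha0
    set s : Fin 3 → ℂ := S ![0, 1, 0] with hs0
    -- e1 * e1 = e2
    have h1 := h ((![1, 0], 0) : GV 2 3) ((![1, 0], 0) : GV 2 3)
    rw [mulExt, mulExt] at h1
    have hT2 : T ![0, 1] = ![0, a * a] := by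
      have := congrArg Prod.fst h1
      simpa using this
    have ha : a ≠ 0 := by
      intro h0
      have hz : T ![0, 1] = 0 := by
        rw [hT2, h0]; funext i; fin_cases i <;> simp
      have h01 : (![0, 1] : Fin 2 → ℂ) = 0 := by
        have := T.injective (hz.trans (map_zero T).symm)
        simpa using this
      simpa using congrFun h01 1
    -- e2 * f2 = f1
    have h2 := h ((![0, 1], 0) : GV 2 3) ((0, ![0, 1, 0]) : GV 2 3)
    rw [mulExt, mulExt] at h2
    have hS1 : S ![1, 0, 0] = ![a * a * s 1, 0, 0] := by
      have h2' := congrArg Prod.snd h2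
      simp only [map_zero] at h2'
      simp only [hT2, ← hs0] at h2'
      simpa using h2'
    have hs1 : s 1 ≠ 0 := by
      intro h0
      have hz : S ![1, 0, 0] = 0 := by
        rw [hS1, h0]; funext i; fin_cases i <;> simp
      have h01 : (![1, 0, 0] : Fin 3 → ℂ) = 0 := by
        have := S.injective (hz.trans (map_zero S).symm)
        simpa using this
      simpa using congrFun h01 0
    -- e1 * f2 = f3
    have h3 := h ((![1, 0], 0) : GV 2 3) ((0, ![0, 1, 0]) : GV 2 3)
    rw [mulExt, mulExt] at h3
    have hS3 : S ![0, 0, 1] = ![a * s 2 * y + T ![1, 0] 1 * s 1, 0, a * s 1] := by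
      have h3' := congrArg Prod.snd h3
      simp only [map_zero] at h3'
      simp only [← ha0, ← hs0] at h3'
      simpa using h3'
    -- e1 * f3 = x • f1
    have h4 := h ((![1, 0], 0) : GV 2 3) ((0, ![0, 0, 1]) : GV 2 3)
    rw [mulExt, mulExt] at h4
    have h4' := congrFun (congrArg Prod.snd h4) 0
    have hxv : (fun k => (![(1:ℂ) * 1 * x + 0 * 0 + 0 * 0 * x + 0 * 0, 0,
        1 * 0 + 0 * 0] : Fin 3 → ℂ) k) = fun k => (x • (![1, 0, 0] : Fin 3 → ℂ)) k := by
      funext i; fin_cases i <;> simp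
    simp only [map_zero, hS3] at h4'
    simp [hS1, hS3] at h4'
    have hxs : (![x, 0, 0] : Fin 3 → ℂ) = x • ![1, 0, 0] := by
      funext i; fin_cases i <;> simp
    rw [hxs, map_smul, hS1, ← ha0] at h4'
    simp at h4'
    have hne : a * a * s 1 ≠ 0 := mul_ne_zero (mul_ne_zero ha ha) hs1
    have hkey : x * (a * a * s 1) = y * (a * a * s 1) := by
      simpa using (by linear_combination h4' : x * (a * a * s 1) = y * (a * a * s 1))
    exact mul_right_cancel₀ hne hkey
  · rintro rfl
    exact ⟨LinearEquiv.refl ℂ _, LinearEquiv.refl ℂ _, fun u v => rfl⟩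

end
end

section
/- Let ω_{ij} ∈ ℂ for 1 ≤ i < j ≤ 4, and consider the ℤ/2-graded algebra over ℂ on a space with homogeneous basis {e₁; f₁, f₂, f₃, f₄} (e₁ even, f_i odd) with multiplication determined by: e₁² = 0, e₁f₁ = f₁e₁ = 0, e₁f_{k+1} = f_{k+1}e₁ = f_k for k = 1, 2, 3, and f_if_j = −f_jf_i = ω_{ij}e₁ for i < j, f_i² = 0. Then for no choice of the parameters ω_{ij} is this algebra a Jordan superalgebra; indeed the Jordan superidentity fails, with J^s(e₁; e₁, e₁, f₄) = −2f₁ ≠ 0. -/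
noncomputable section

/-- The type (1,4) tensor with `e₁f₂ = f₁`, `e₁f₃ = f₂`, `e₁f₄ = f₃` and
`f_if_j = ω_{ij} e₁` for `i < j` (extended skew-symmetrically). -/
def M8 (ω : Fin 4 → Fin 4 → ℂ) : Tensor 1 4 :=
  (fun _ _ _ => 0,
   fun _ => ![![0,0,0,0], ![1,0,0,0], ![0,1,0,0], ![0,0,1,0]],
   fun i j _ => if i < j then ω i j else if j < i then -ω j i else 0)

/-- The odd element `-2f₁` of `GV 1 4`. -/
def negTwoF1 : GV 1 4 := ((0 : Fin 1 → ℂ), (-2 : ℂ) • (Pi.single (0 : Fin 4) (1 : ℂ) : Fin 4 → ℂ))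

section Products

variable {m n : ℕ} (μ : Tensor m n)

@[simp]
lemma mulOf_zero_left (y : GV m n) : mulOf μ 0 y = 0 := by
  ext <;> simp [mulOf]

@[simp]
lemma mulOf_zero_right (x : GV m n) : mulOf μ x 0 = 0 := by
  ext <;> simp [mulOf]

lemma mulOf_eps_eps (i j : Fin m) : mulOf μ (eps i) (eps j) = (μ.1 i j, 0) := by
  ext k <;> simp [mulOf, eps, Pi.single_apply]

lemma mulOf_eps_ph (i : Fin m) (j : Fin n) : mulOf μ (eps i) (ph j) = (0, μ.2.1 i j) := by
  ext k <;> simp [mulOf, eps, ph, Pi.single_apply]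

/-- When `e² = 0` every term of `J^s(e; e, e, z)` containing `e²` drops out, leaving the two
copies of `e(e(ez))`. -/
lemma superJ_of_mulOf_self_eq_zero (p : ℕ) {e : GV m n} (he : mulOf μ e e = 0) (z : GV m n) :
    superJ μ 0 0 0 p e e e z = (-2 : ℂ) • mulOf μ e (mulOf μ e (mulOf μ e z)) := by
  simp only [superJ, he, mulOf_zero_left, mulOf_zero_right, sgn, zero_mul, mul_zero, add_zero,
    pow_zero, one_smul]
  module

end Products

lemma isHom_eps {m n : ℕ} (i : Fin m) : IsHom 0 (eps i : GV m n) := Or.inl ⟨rfl, rfl⟩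

lemma isHom_ph {m n : ℕ} (j : Fin n) : IsHom 1 (ph j : GV m n) := Or.inr ⟨rfl, rfl⟩

lemma ph_ne_zero {m n : ℕ} (j : Fin n) : (ph j : GV m n) ≠ 0 := by
  intro h
  simpa [ph] using congrFun (congrArg Prod.snd h) j

section M8

variable (ω : Fin 4 → Fin 4 → ℂ)

lemma M8_eps_mul_eps : mulOf (M8 ω) (eps 0) (eps 0) = 0 := by
  rw [mulOf_eps_eps]
  rfl

lemma M8_eps_mul_ph_of_succ {i j : Fin 4} (hij : (i : ℕ) + 1 = j) :
    mulOf (M8 ω) (eps 0) (ph j) = ph i := by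
  rw [mulOf_eps_ph]
  ext k
  · rfl
  · fin_cases i <;> fin_cases j <;> fin_cases k <;> simp_all [M8, ph]

end M8

lemma negTwoF1_eq_smul_ph : negTwoF1 = (-2 : ℂ) • ph 0 := by
  simp [negTwoF1, ph]

/-- for no choice of the parameters `ω_{ij}` is `M8 ω` a Jordan
superalgebra; indeed `J^s(e₁; e₁, e₁, f₄) = -2f₁ ≠ 0`. -/
theorem stmt8 (ω : Fin 4 → Fin 4 → ℂ) :
    superJ (M8 ω) 0 0 0 1 (eps 0) (eps 0) (eps 0) (ph 3) = negTwoF1 ∧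
      negTwoF1 ≠ (0 : GV 1 4) ∧
      ¬ IsJordanSuper (M8 ω) := by
  have hJ : superJ (M8 ω) 0 0 0 1 (eps 0) (eps 0) (eps 0) (ph 3) = negTwoF1 := by
    rw [superJ_of_mulOf_self_eq_zero _ _ (M8_eps_mul_eps ω), negTwoF1_eq_smul_ph,
      M8_eps_mul_ph_of_succ ω (i := 2) rfl, M8_eps_mul_ph_of_succ ω (i := 1) rfl,
      M8_eps_mul_ph_of_succ ω (i := 0) rfl]
  have hne : negTwoF1 ≠ (0 : GV 1 4) := by
    rw [negTwoF1_eq_smul_ph]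
    exact smul_ne_zero (by norm_num) (ph_ne_zero 0)
  refine ⟨hJ, hne, fun hJordan => hne ?_⟩
  rw [← hJ]
  exact hJordan.2 0 0 0 1 _ _ _ _ (isHom_eps 0) (isHom_eps 0) (isHom_eps 0) (isHom_ph 3)

end
end

section
/- There is no nilpotent Jordan superalgebra J over ℂ of type (2,3) admitting a homogeneous basis {e₁, e₂; f₁, f₂, f₃} (e_i even, f_j odd) such that e₁² = e₂, e₁e₂ = e₂² = 0, e₂f₁ = 0, e₂f₂ = f₁, and e₂f₃ = f₂. In other words, if J₀ is the 2-dimensional Jordan algebra with e₁² = e₂ and all other products zero and dim J₁ = 3, then the left multiplication by e₂ on J₁ cannot be a single nilpotent Jordan block of size 3. -/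
/-!
Let `B` and `N` be the operators of multiplication by `e₁` and `e₂` on the odd part. The Jordan
superidentity, with the odd argument in the first or in the last slot, yields `BN = NB`,
`2B³ = 3NB` and `N² = B²N + NB²`. Commuting with the Jordan block `N`, `B` is a polynomial
`a + bN + cN²`; the second relation forces `a = b = 0`, so `B² = 0`, and the third relation then
gives `N² = 0`, which is absurd.
-/

noncomputable section

open Matrix

section
variable {m n : ℕ} (μ : Tensor m n)

def evenMul (a b : Fin m → ℂ) : Fin m → ℂ := (mulOf μ (a, 0) (b, 0)).1

def oddMulMatrix (a : Fin m → ℂ) : Matrix (Fin n) (Fin n) ℂ :=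
  Matrix.of fun k j => ∑ i, a i * μ.2.1 i j k

@[simp]
theorem oddMulMatrix_zero : oddMulMatrix μ 0 = 0 := by
  ext; simp [oddMulMatrix]

@[simp]
theorem mulOf_even_even (a b : Fin m → ℂ) : mulOf μ (a, 0) (b, 0) = (evenMul μ a b, 0) := by
  ext <;> simp [evenMul, mulOf]

@[simp]
theorem evenMul_zero_right (a : Fin m → ℂ) : evenMul μ a 0 = 0 := by
  ext; simp [evenMul, mulOf]

@[simp]
theorem mulOf_even_odd (a : Fin m → ℂ) (v : Fin n → ℂ) :
    mulOf μ (a, 0) (0, v) = (0, oddMulMatrix μ a *ᵥ v) := by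
  ext k
  · simp [mulOf]
  · simp only [mulOf, oddMulMatrix, mulVec, dotProduct, of_apply, Finset.sum_mul, Pi.zero_apply,
      zero_mul, mul_zero, Finset.sum_const_zero, add_zero]
    rw [Finset.sum_comm]
    exact Finset.sum_congr rfl fun _ _ => Finset.sum_congr rfl fun _ _ => by ring

@[simp]
theorem mulOf_odd_even (a : Fin m → ℂ) (v : Fin n → ℂ) :
    mulOf μ (0, v) (a, 0) = (0, oddMulMatrix μ a *ᵥ v) := by
  rw [← mulOf_even_odd]
  ext <;> simp [mulOf]

variable {μ}

theorem IsJordanSuper.oddMulMatrix_commutator_identity (h : IsJordanSuper μ)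
    (a b c : Fin m → ℂ) :
    oddMulMatrix μ (evenMul μ b c) * oddMulMatrix μ a
      + oddMulMatrix μ (evenMul μ a c) * oddMulMatrix μ b
      + oddMulMatrix μ (evenMul μ a b) * oddMulMatrix μ c
      = oddMulMatrix μ a * oddMulMatrix μ (evenMul μ b c)
      + oddMulMatrix μ b * oddMulMatrix μ (evenMul μ a c)
      + oddMulMatrix μ c * oddMulMatrix μ (evenMul μ a b) := by
  refine ext_iff_mulVec.2 fun v => ?_
  have := congrArg Prod.snd <| h.2 1 0 0 0 (0, v) (a, 0) (b, 0) (c, 0)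
    (.inr ⟨rfl, rfl⟩) (.inl ⟨rfl, rfl⟩) (.inl ⟨rfl, rfl⟩) (.inl ⟨rfl, rfl⟩)
  simp only [superJ, mulOf_even_even, mulOf_even_odd, mulOf_odd_even, sgn, Prod.snd_add,
    Prod.snd_sub, Prod.snd_zero, mul_zero, add_zero, mul_one, pow_zero, one_smul] at this
  simp only [add_mulVec, ← mulVec_mulVec]
  rw [← sub_eq_zero, ← this]
  abel

theorem IsJordanSuper.oddMulMatrix_product_identity (h : IsJordanSuper μ) (a b c : Fin m → ℂ) :
    oddMulMatrix μ (evenMul μ a b) * oddMulMatrix μ c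
      + oddMulMatrix μ (evenMul μ a c) * oddMulMatrix μ b
      + oddMulMatrix μ (evenMul μ b c) * oddMulMatrix μ a
      = oddMulMatrix μ b * oddMulMatrix μ a * oddMulMatrix μ c
      + oddMulMatrix μ c * oddMulMatrix μ a * oddMulMatrix μ b
      + oddMulMatrix μ (evenMul μ a (evenMul μ b c)) := by
  refine ext_iff_mulVec.2 fun v => ?_
  have := congrArg Prod.snd <| h.2 0 0 0 1 (a, 0) (b, 0) (c, 0) (0, v)
    (.inl ⟨rfl, rfl⟩) (.inl ⟨rfl, rfl⟩) (.inl ⟨rfl, rfl⟩) (.inr ⟨rfl, rfl⟩)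
  simp only [superJ, mulOf_even_even, mulOf_even_odd, mulOf_odd_even, sgn, Prod.snd_add,
    Prod.snd_sub, Prod.snd_zero, mul_zero, add_zero, mul_one, pow_zero, one_smul] at this
  simp only [add_mulVec, ← mulVec_mulVec]
  rw [← sub_eq_zero, ← this]
  abel

end

def jordanBlock3 : Matrix (Fin 3) (Fin 3) ℂ := !![0, 1, 0; 0, 0, 1; 0, 0, 0]

theorem eq_toeplitz_of_commute_jordanBlock3 {B : Matrix (Fin 3) (Fin 3) ℂ}
    (h : Commute B jordanBlock3) :
    B = !![B 0 0, B 0 1, B 0 2; 0, B 0 0, B 0 1; 0, 0, B 0 0] := by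
  have e : ∀ i j, (B * jordanBlock3) i j = (jordanBlock3 * B) i j := fun i j =>
    congrFun₂ h.eq i j
  simp only [jordanBlock3, mul_apply, of_apply, cons_val', cons_val_fin_one, Fin.sum_univ_three,
    Fin.isValue, cons_val_zero, cons_val_one, cons_val, Fin.forall_fin_succ, mul_zero, add_zero,
    cons_val_succ, mul_one, Fin.succ_zero_eq_one, zero_add, Fin.succ_one_eq_two,
    IsEmpty.forall_iff, and_true, zero_mul, one_mul, true_and] at e
  ext i j
  fin_cases i <;> fin_cases j <;> simp <;> grind

theorem sq_eq_zero_of_commute_jordanBlock3 {B : Matrix (Fin 3) (Fin 3) ℂ}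
    (hc : Commute B jordanBlock3) (h : (2 : ℂ) • B ^ 3 = (3 : ℂ) • (jordanBlock3 * B)) :
    B ^ 2 = 0 := by
  rw [eq_toeplitz_of_commute_jordanBlock3 hc] at h ⊢
  have ha : B 0 0 = 0 := by
    simpa [jordanBlock3, pow_succ] using congrFun₂ h 0 0
  have hb : B 0 1 = 0 := by
    simpa [jordanBlock3, pow_succ, ha] using congrFun₂ h 0 2
  ext i j
  fin_cases i <;> fin_cases j <;> simp [pow_two, mul_apply, Fin.sum_univ_three, ha, hb]

theorem jordanBlock3_sq_ne_zero : jordanBlock3 ^ 2 ≠ 0 := fun h => by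
  simpa [jordanBlock3, pow_two] using congrFun₂ h 0 2

/-- there is no nilpotent Jordan superalgebra of type (2,3) with
`e₁² = e₂`, `e₁e₂ = e₂² = 0` in which left multiplication by `e₂` acts on the odd
part as a single nilpotent Jordan block of size 3. -/
theorem stmt9 :
    ¬ ∃ μ : Tensor 2 3, IsJordanSuper μ ∧ IsNilpotentT μ ∧
        mulOf μ (eps 0) (eps 0) = eps 1 ∧
        mulOf μ (eps 0) (eps 1) = 0 ∧
        mulOf μ (eps 1) (eps 1) = 0 ∧
        mulOf μ (eps 1) (ph 0) = 0 ∧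
        mulOf μ (eps 1) (ph 1) = ph 0 ∧
        mulOf μ (eps 1) (ph 2) = ph 1 := by
  rintro ⟨μ, hμ, -, h00, h01, -, hN0, hN1, hN2⟩
  simp only [eps, ph, mulOf_even_even, mulOf_even_odd, Prod.mk.injEq, Prod.mk_eq_zero, and_true,
    true_and] at h00 h01 hN0 hN1 hN2
  have hN : oddMulMatrix μ (Pi.single 1 1) = jordanBlock3 := by
    simp only [funext_iff, mulVec_single_one, col_apply] at hN0 hN1 hN2
    ext i j
    fin_cases i <;> fin_cases j <;> simp [hN0, hN1, hN2, jordanBlock3]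
  set e₁ : Fin 2 → ℂ := Pi.single 0 1
  have hcomm := hμ.oddMulMatrix_commutator_identity e₁ e₁ e₁
  have hcube := hμ.oddMulMatrix_product_identity e₁ e₁ e₁
  have hsq := hμ.oddMulMatrix_product_identity e₁ e₁ (Pi.single 1 1)
  set B := oddMulMatrix μ e₁
  simp only [h00, h01, hN, evenMul_zero_right, oddMulMatrix_zero] at hcomm hcube hsq
  have hc : Commute B jordanBlock3 := by
    refine smul_right_injective _ (three_ne_zero (α := ℂ)) ?_
    simpa only [ofNat_smul_eq_nsmul, succ_nsmul, zero_nsmul, zero_add] using hcomm.symm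
  have hB : B ^ 2 = 0 := sq_eq_zero_of_commute_jordanBlock3 hc <| by
    simpa only [pow_succ, pow_zero, one_mul, ofNat_smul_eq_nsmul, succ_nsmul, zero_nsmul, zero_add,
      add_zero] using hcube.symm
  refine jordanBlock3_sq_ne_zero ?_
  simpa only [pow_two, zero_mul, add_zero, mul_assoc, ← pow_two, hB, mul_zero] using hsq
end
end

section
/- Let μ and μ′ be superalgebra structure tensors of type (m,n), and suppose μ degenerates to μ′. For a structure tensor ν, define its annihilator Ann(ν) = {a ∈ ℂ^m ⊕ ℂ^n : a·x = x·a = 0 for all x}, a graded subspace, with even part Ann(ν) ∩ (ℂ^m ⊕ 0) and odd part Ann(ν) ∩ (0 ⊕ ℂ^n). Then dim(Ann(μ) ∩ (ℂ^m ⊕ 0)) ≤ dim(Ann(μ′) ∩ (ℂ^m ⊕ 0)) and dim(Ann(μ) ∩ (0 ⊕ ℂ^n)) ≤ dim(Ann(μ′) ∩ (0 ⊕ ℂ^n)). -/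
noncomputable section

/-- The annihilator of the multiplication determined by `ν`. -/
def annSet {m n : ℕ} (ν : Tensor m n) : Set (GV m n) :=
  {a | ∀ x, mulOf ν a x = 0 ∧ mulOf ν x a = 0}

namespace Stmt14Aux
open Module Submodule Filter Topology

variable {m n : ℕ}

lemma mulOf_add_left (ν : Tensor m n) (x x' y : GV m n) :
    mulOf ν (x + x') y = mulOf ν x y + mulOf ν x' y := by
  refine Prod.ext (funext fun k => ?_) (funext fun k => ?_) <;>
    simp only [mulOf, Prod.fst_add, Prod.snd_add, Pi.add_apply, add_mul, mul_add,
      Finset.sum_add_distrib] <;> ring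

lemma mulOf_add_right (ν : Tensor m n) (x y y' : GV m n) :
    mulOf ν x (y + y') = mulOf ν x y + mulOf ν x y' := by
  refine Prod.ext (funext fun k => ?_) (funext fun k => ?_) <;>
    simp only [mulOf, Prod.fst_add, Prod.snd_add, Pi.add_apply, add_mul, mul_add,
      Finset.sum_add_distrib] <;> ring

lemma mulOf_smul_left (ν : Tensor m n) (c : ℂ) (x y : GV m n) :
    mulOf ν (c • x) y = c • mulOf ν x y := by
  refine Prod.ext (funext fun k => ?_) (funext fun k => ?_) <;>
    simp only [mulOf, Prod.smul_fst, Prod.smul_snd, Pi.smul_apply, smul_eq_mul, mul_add,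
      Finset.mul_sum, mul_assoc] <;>
    refine congrArg₂ (· + ·) ?_ ?_ <;>
    exact Finset.sum_congr rfl fun i _ => Finset.sum_congr rfl fun j _ => by ring

lemma mulOf_smul_right (ν : Tensor m n) (c : ℂ) (x y : GV m n) :
    mulOf ν x (c • y) = c • mulOf ν x y := by
  refine Prod.ext (funext fun k => ?_) (funext fun k => ?_) <;>
    simp only [mulOf, Prod.smul_fst, Prod.smul_snd, Pi.smul_apply, smul_eq_mul, mul_add,
      Finset.mul_sum, mul_assoc] <;>
    refine congrArg₂ (· + ·) ?_ ?_ <;>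
    exact Finset.sum_congr rfl fun i _ => Finset.sum_congr rfl fun j _ => by ring

lemma mulOf_zero_left (ν : Tensor m n) (y : GV m n) : mulOf ν 0 y = 0 := by
  refine Prod.ext (funext fun k => ?_) (funext fun k => ?_) <;> simp [mulOf]

lemma mulOf_zero_right (ν : Tensor m n) (y : GV m n) : mulOf ν y 0 = 0 := by
  refine Prod.ext (funext fun k => ?_) (funext fun k => ?_) <;> simp [mulOf]

/-- The annihilator as a submodule. -/
def annSub (ν : Tensor m n) : Submodule ℂ (GV m n) where
  carrier := annSet ν
  zero_mem' := fun x => ⟨mulOf_zero_left ν x, mulOf_zero_right ν x⟩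
  add_mem' := by
    intro a b ha hb x
    exact ⟨by rw [mulOf_add_left, (ha x).1, (hb x).1, add_zero],
           by rw [mulOf_add_right, (ha x).2, (hb x).2, add_zero]⟩
  smul_mem' := by
    intro c a ha x
    exact ⟨by rw [mulOf_smul_left, (ha x).1, smul_zero],
           by rw [mulOf_smul_right, (ha x).2, smul_zero]⟩

@[simp] lemma mem_annSub {ν : Tensor m n} {a : GV m n} : a ∈ annSub ν ↔ a ∈ annSet ν := Iff.rfl

/-- Even part of the annihilator. -/
def evenP (ν : Tensor m n) : Submodule ℂ (GV m n) :=
  annSub ν ⊓ LinearMap.ker (LinearMap.snd ℂ (Fin m → ℂ) (Fin n → ℂ))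

/-- Odd part of the annihilator. -/
def oddP (ν : Tensor m n) : Submodule ℂ (GV m n) :=
  annSub ν ⊓ LinearMap.ker (LinearMap.fst ℂ (Fin m → ℂ) (Fin n → ℂ))

lemma mem_evenP {ν : Tensor m n} {a : GV m n} :
    a ∈ evenP ν ↔ a ∈ annSet ν ∧ a.2 = 0 := by
  simp [evenP, Submodule.mem_inf, LinearMap.mem_ker]

lemma mem_oddP {ν : Tensor m n} {a : GV m n} :
    a ∈ oddP ν ↔ a ∈ annSet ν ∧ a.1 = 0 := by
  simp [oddP, Submodule.mem_inf, LinearMap.mem_ker]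

lemma span_even (ν : Tensor m n) :
    Submodule.span ℂ (annSet ν ∩ {a | a.2 = 0}) = evenP ν := by
  have h : annSet ν ∩ {a | a.2 = 0} = (evenP ν : Set (GV m n)) := by
    ext a; simp [mem_evenP, Set.mem_inter_iff]
  rw [h, Submodule.span_eq]

lemma span_odd (ν : Tensor m n) :
    Submodule.span ℂ (annSet ν ∩ {a | a.1 = 0}) = oddP ν := by
  have h : annSet ν ∩ {a | a.1 = 0} = (oddP ν : Set (GV m n)) := by
    ext a; simp [mem_oddP, Set.mem_inter_iff]
  rw [h, Submodule.span_eq]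

lemma iso_finrank {μ ν : Tensor m n} (h : Iso μ ν) :
    Module.finrank ℂ (evenP ν) = Module.finrank ℂ (evenP μ) ∧
    Module.finrank ℂ (oddP ν) = Module.finrank ℂ (oddP μ) := by
  obtain ⟨T, S, hTS⟩ := h
  let Φ : GV m n ≃ₗ[ℂ] GV m n := T.prodCongr S
  have hΦ : ∀ x : GV m n, Φ x = (T x.1, S x.2) := fun x => rfl
  have hΦs : ∀ x : GV m n, Φ.symm x = (T.symm x.1, S.symm x.2) := fun x => rfl
  have hmul : ∀ x y, Φ (mulOf μ x y) = mulOf ν (Φ x) (Φ y) := by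
    intro x y; rw [hΦ, hΦ, hΦ]; exact hTS x y
  have hmul' : ∀ x y, Φ.symm (mulOf ν x y) = mulOf μ (Φ.symm x) (Φ.symm y) := by
    intro x y
    have h2 := hmul (Φ.symm x) (Φ.symm y)
    simp only [Φ.apply_symm_apply] at h2
    rw [← h2, Φ.symm_apply_apply]
  have hann : ∀ a, Φ.symm a ∈ annSet μ ↔ a ∈ annSet ν := by
    intro a
    constructor
    · intro ha x
      constructor
      · have e1 : mulOf ν a x = Φ (mulOf μ (Φ.symm a) (Φ.symm x)) := by
          rw [hmul]; simp
        rw [e1, (ha (Φ.symm x)).1, map_zero]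
      · have e1 : mulOf ν x a = Φ (mulOf μ (Φ.symm x) (Φ.symm a)) := by
          rw [hmul]; simp
        rw [e1, (ha (Φ.symm x)).2, map_zero]
    · intro ha x
      constructor
      · have e1 : mulOf μ (Φ.symm a) x = Φ.symm (mulOf ν a (Φ x)) := by
          rw [hmul']; simp
        rw [e1, (ha (Φ x)).1, map_zero]
      · have e1 : mulOf μ x (Φ.symm a) = Φ.symm (mulOf ν (Φ x) a) := by
          rw [hmul']; simp
        rw [e1, (ha (Φ x)).2, map_zero]
  have hmapE : Submodule.map (Φ : GV m n →ₗ[ℂ] GV m n) (evenP μ) = evenP ν := by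
    ext a
    rw [Submodule.mem_map_equiv, mem_evenP, mem_evenP, hann a, hΦs]
    simp only []
    constructor
    · rintro ⟨h1, h2⟩
      exact ⟨h1, by simpa using S.symm.map_eq_zero_iff.mp h2⟩
    · rintro ⟨h1, h2⟩
      exact ⟨h1, by rw [h2]; simp⟩
  have hmapO : Submodule.map (Φ : GV m n →ₗ[ℂ] GV m n) (oddP μ) = oddP ν := by
    ext a
    rw [Submodule.mem_map_equiv, mem_oddP, mem_oddP, hann a, hΦs]
    simp only []
    constructor
    · rintro ⟨h1, h2⟩
      exact ⟨h1, by simpa using T.symm.map_eq_zero_iff.mp h2⟩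
    · rintro ⟨h1, h2⟩
      exact ⟨h1, by rw [h2]; simp⟩
  constructor
  · rw [← hmapE, LinearEquiv.finrank_map_eq]
  · rw [← hmapO, LinearEquiv.finrank_map_eq]

/-- Embedding of the even Euclidean coordinate space into `GV m n`. -/
def Lm : EuclideanSpace ℂ (Fin m) →ₗ[ℂ] GV m n :=
  (LinearMap.inl ℂ (Fin m → ℂ) (Fin n → ℂ)).comp
    (WithLp.linearEquiv 2 ℂ (Fin m → ℂ)).toLinearMap

/-- Embedding of the odd Euclidean coordinate space into `GV m n`. -/
def Ln : EuclideanSpace ℂ (Fin n) →ₗ[ℂ] GV m n :=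
  (LinearMap.inr ℂ (Fin m → ℂ) (Fin n → ℂ)).comp
    (WithLp.linearEquiv 2 ℂ (Fin n → ℂ)).toLinearMap

lemma Lm_inj : Function.Injective (Lm (m := m) (n := n)) := by
  have : ⇑(Lm (m := m) (n := n)) =
      (LinearMap.inl ℂ (Fin m → ℂ) (Fin n → ℂ)) ∘ (WithLp.linearEquiv 2 ℂ (Fin m → ℂ)) := rfl
  rw [this]
  exact LinearMap.inl_injective.comp (WithLp.linearEquiv 2 ℂ (Fin m → ℂ)).injective

lemma Ln_inj : Function.Injective (Ln (m := m) (n := n)) := by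
  have : ⇑(Ln (m := m) (n := n)) =
      (LinearMap.inr ℂ (Fin m → ℂ) (Fin n → ℂ)) ∘ (WithLp.linearEquiv 2 ℂ (Fin n → ℂ)) := rfl
  rw [this]
  exact LinearMap.inr_injective.comp (WithLp.linearEquiv 2 ℂ (Fin n → ℂ)).injective

lemma range_Lm : LinearMap.range (Lm (m := m) (n := n)) =
    LinearMap.ker (LinearMap.snd ℂ (Fin m → ℂ) (Fin n → ℂ)) := by
  rw [Lm, LinearMap.range_comp, LinearEquiv.range, Submodule.map_top, LinearMap.range_inl]

lemma range_Ln : LinearMap.range (Ln (m := m) (n := n)) =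
    LinearMap.ker (LinearMap.fst ℂ (Fin m → ℂ) (Fin n → ℂ)) := by
  rw [Ln, LinearMap.range_comp, LinearEquiv.range, Submodule.map_top, LinearMap.range_inr]

lemma finrank_comap_even (ν : Tensor m n) :
    Module.finrank ℂ (Submodule.comap Lm (evenP ν)) = Module.finrank ℂ (evenP ν) := by
  have h1 : Submodule.map Lm (Submodule.comap Lm (evenP ν)) = evenP ν := by
    rw [Submodule.map_comap_eq, range_Lm]
    exact inf_eq_right.mpr inf_le_right
  conv_rhs => rw [← h1]
  exact (Submodule.equivMapOfInjective Lm Lm_inj _).finrank_eq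

lemma finrank_comap_odd (ν : Tensor m n) :
    Module.finrank ℂ (Submodule.comap Ln (oddP ν)) = Module.finrank ℂ (oddP ν) := by
  have h1 : Submodule.map Ln (Submodule.comap Ln (oddP ν)) = oddP ν := by
    rw [Submodule.map_comap_eq, range_Ln]
    exact inf_eq_right.mpr inf_le_right
  conv_rhs => rw [← h1]
  exact (Submodule.equivMapOfInjective Ln Ln_inj _).finrank_eq

lemma continuous_mulOf :
    Continuous (fun p : (Tensor m n) × GV m n × GV m n => mulOf p.1 p.2.1 p.2.2) := by
  unfold mulOf
  fun_prop

lemma continuous_Lm : Continuous (Lm (m := m) (n := n)) := by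
  have : ⇑(Lm (m := m) (n := n)) =
      fun a : EuclideanSpace ℂ (Fin m) => (((WithLp.equiv 2 (Fin m → ℂ)) a, 0) : GV m n) := rfl
  rw [this]
  exact (PiLp.continuous_ofLp (p := 2) (β := fun _ : Fin m => ℂ)).prodMk continuous_const

lemma continuous_Ln : Continuous (Ln (m := m) (n := n)) := by
  have : ⇑(Ln (m := m) (n := n)) =
      fun a : EuclideanSpace ℂ (Fin n) => ((0, (WithLp.equiv 2 (Fin n → ℂ)) a) : GV m n) := rfl
  rw [this]
  exact continuous_const.prodMk (PiLp.continuous_ofLp (p := 2) (β := fun _ : Fin n => ℂ))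

lemma isClosed_graphGV_even : IsClosed {p : Tensor m n × GV m n | p.2 ∈ evenP p.1} := by
  have hset : {p : Tensor m n × GV m n | p.2 ∈ evenP p.1}
      = (⋂ x : GV m n, ({p : Tensor m n × GV m n | mulOf p.1 p.2 x = 0}
          ∩ {p : Tensor m n × GV m n | mulOf p.1 x p.2 = 0}))
        ∩ {p : Tensor m n × GV m n | p.2.2 = 0} := by
    ext p
    simp only [Set.mem_setOf_eq, mem_evenP, Set.mem_iInter, Set.mem_inter_iff]
    constructor
    · intro hp
      exact ⟨fun x => hp.1 x, hp.2⟩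
    · intro hp
      exact ⟨fun x => hp.1 x, hp.2⟩
  rw [hset]
  refine IsClosed.inter (isClosed_iInter fun x => IsClosed.inter ?_ ?_) ?_
  · exact isClosed_eq (by unfold mulOf; fun_prop) continuous_const
  · exact isClosed_eq (by unfold mulOf; fun_prop) continuous_const
  · exact isClosed_eq (by fun_prop) continuous_const

lemma isClosed_graphGV_odd : IsClosed {p : Tensor m n × GV m n | p.2 ∈ oddP p.1} := by
  have hset : {p : Tensor m n × GV m n | p.2 ∈ oddP p.1}
      = (⋂ x : GV m n, ({p : Tensor m n × GV m n | mulOf p.1 p.2 x = 0}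
          ∩ {p : Tensor m n × GV m n | mulOf p.1 x p.2 = 0}))
        ∩ {p : Tensor m n × GV m n | p.2.1 = 0} := by
    ext p
    simp only [Set.mem_setOf_eq, mem_oddP, Set.mem_iInter, Set.mem_inter_iff]
    constructor
    · intro hp
      exact ⟨fun x => hp.1 x, hp.2⟩
    · intro hp
      exact ⟨fun x => hp.1 x, hp.2⟩
  rw [hset]
  refine IsClosed.inter (isClosed_iInter fun x => IsClosed.inter ?_ ?_) ?_
  · exact isClosed_eq (by unfold mulOf; fun_prop) continuous_const
  · exact isClosed_eq (by unfold mulOf; fun_prop) continuous_const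
  · exact isClosed_eq (by fun_prop) continuous_const

lemma isClosed_graph_even :
    IsClosed {p : Tensor m n × EuclideanSpace ℂ (Fin m) | p.2 ∈ Submodule.comap Lm (evenP p.1)} := by
  have hset : {p : Tensor m n × EuclideanSpace ℂ (Fin m) | p.2 ∈ Submodule.comap Lm (evenP p.1)}
      = (fun p : Tensor m n × EuclideanSpace ℂ (Fin m) => ((p.1, Lm p.2) : Tensor m n × GV m n))
        ⁻¹' {p : Tensor m n × GV m n | p.2 ∈ evenP p.1} := rfl
  rw [hset]
  exact isClosed_graphGV_even.preimage (continuous_fst.prodMk (continuous_Lm.comp continuous_snd))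

lemma isClosed_graph_odd :
    IsClosed {p : Tensor m n × EuclideanSpace ℂ (Fin n) | p.2 ∈ Submodule.comap Ln (oddP p.1)} := by
  have hset : {p : Tensor m n × EuclideanSpace ℂ (Fin n) | p.2 ∈ Submodule.comap Ln (oddP p.1)}
      = (fun p : Tensor m n × EuclideanSpace ℂ (Fin n) => ((p.1, Ln p.2) : Tensor m n × GV m n))
        ⁻¹' {p : Tensor m n × GV m n | p.2 ∈ oddP p.1} := rfl
  rw [hset]
  exact isClosed_graphGV_odd.preimage (continuous_fst.prodMk (continuous_Ln.comp continuous_snd))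

lemma exists_orthonormal {N : ℕ} (K : Submodule ℂ (EuclideanSpace ℂ (Fin N))) {d : ℕ}
    (hd : d ≤ Module.finrank ℂ K) :
    ∃ v : Fin d → EuclideanSpace ℂ (Fin N), Orthonormal ℂ v ∧ ∀ i, v i ∈ K := by
  let b := stdOrthonormalBasis ℂ K
  refine ⟨fun i => (b (Fin.castLE hd i) : EuclideanSpace ℂ (Fin N)), ?_, fun i => (b _).2⟩
  have h1 : Orthonormal ℂ (fun i : Fin d => b (Fin.castLE hd i)) :=
    b.orthonormal.comp _ (Fin.castLE_injective hd)
  exact h1.comp_linearIsometry K.subtypeₗᵢ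

lemma le_finrank_of_orthonormal {N d : ℕ} (K : Submodule ℂ (EuclideanSpace ℂ (Fin N)))
    (v : Fin d → EuclideanSpace ℂ (Fin N)) (hv : Orthonormal ℂ v) (hK : ∀ i, v i ∈ K) :
    d ≤ Module.finrank ℂ K := by
  have h1 : LinearIndependent ℂ (fun i => (⟨v i, hK i⟩ : K)) :=
    LinearIndependent.of_comp K.subtype hv.linearIndependent
  simpa using h1.fintype_card_le_finrank

lemma semicont {m n N : ℕ} (K : Tensor m n → Submodule ℂ (EuclideanSpace ℂ (Fin N)))
    (hC : IsClosed {p : Tensor m n × EuclideanSpace ℂ (Fin N) | p.2 ∈ K p.1})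
    {O : Set (Tensor m n)} {μ' : Tensor m n} (hcl : μ' ∈ closure O) {d : ℕ}
    (hd : ∀ ν ∈ O, d ≤ Module.finrank ℂ (K ν)) : d ≤ Module.finrank ℂ (K μ') := by
  obtain ⟨s, hsO, hs⟩ := mem_closure_iff_seq_limit.mp hcl
  choose v hv1 hv2 using fun t => exists_orthonormal (K (s t)) (hd (s t) (hsO t))
  have hb : ∀ t, v t ∈ Metric.closedBall (0 : Fin d → EuclideanSpace ℂ (Fin N)) 1 := by
    intro t
    rw [Metric.mem_closedBall, dist_zero_right]
    exact (pi_norm_le_iff_of_nonneg zero_le_one).2 fun i => le_of_eq ((hv1 t).1 i)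
  obtain ⟨w, -, φ, hφ, hw⟩ := tendsto_subseq_of_bounded Metric.isBounded_closedBall hb
  have hcomp : ∀ i, Filter.Tendsto (fun t => v (φ t) i) Filter.atTop (nhds (w i)) :=
    fun i => ((continuous_apply i).tendsto w).comp hw
  have hwK : ∀ i, w i ∈ K μ' := by
    intro i
    have ht : Filter.Tendsto (fun t => (s (φ t), v (φ t) i)) Filter.atTop (nhds (μ', w i)) :=
      ((hs.comp hφ.tendsto_atTop)).prodMk_nhds (hcomp i)
    exact hC.mem_of_tendsto ht (Filter.Eventually.of_forall fun t => hv2 (φ t) i)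
  refine le_finrank_of_orthonormal (K μ') w ⟨?_, ?_⟩ hwK
  · intro i
    have h1 : Filter.Tendsto (fun t => ‖v (φ t) i‖) Filter.atTop (nhds ‖w i‖) := (hcomp i).norm
    have h2 : (fun t => ‖v (φ t) i‖) = fun _ => (1 : ℝ) := funext fun t => (hv1 (φ t)).1 i
    rw [h2] at h1
    exact tendsto_nhds_unique h1 tendsto_const_nhds
  · intro i j hij
    have h1 : Filter.Tendsto (fun t => (inner ℂ (v (φ t) i) (v (φ t) j) : ℂ)) Filter.atTop
        (nhds (inner ℂ (w i) (w j))) := (hcomp i).inner (hcomp j)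
    have h2 : (fun t => (inner ℂ (v (φ t) i) (v (φ t) j) : ℂ)) = fun _ => (0 : ℂ) :=
      funext fun t => (hv1 (φ t)).2 hij
    rw [h2] at h1
    exact tendsto_nhds_unique h1 tendsto_const_nhds

end Stmt14Aux

open Stmt14Aux in
/-- degeneration does not decrease the graded dimensions of the
annihilator. -/
theorem stmt14 {m n : ℕ} (μ μ' : Tensor m n) (h : degenerates μ μ') :
    Module.finrank ℂ ↥(Submodule.span ℂ (annSet μ ∩ {a | a.2 = 0}))
        ≤ Module.finrank ℂ ↥(Submodule.span ℂ (annSet μ' ∩ {a | a.2 = 0})) ∧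
    Module.finrank ℂ ↥(Submodule.span ℂ (annSet μ ∩ {a | a.1 = 0}))
        ≤ Module.finrank ℂ ↥(Submodule.span ℂ (annSet μ' ∩ {a | a.1 = 0})) := by
  rw [span_even, span_even, span_odd, span_odd]
  constructor
  · have h1 : Module.finrank ℂ (evenP μ) ≤
        Module.finrank ℂ (Submodule.comap Lm (evenP μ')) := by
      refine semicont (fun ν => Submodule.comap Lm (evenP ν)) isClosed_graph_even h fun ν hν => ?_
      rw [finrank_comap_even, (iso_finrank hν).1]
    rwa [finrank_comap_even] at h1
  · have h1 : Module.finrank ℂ (oddP μ) ≤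
        Module.finrank ℂ (Submodule.comap Ln (oddP μ')) := by
      refine semicont (fun ν => Submodule.comap Ln (oddP ν)) isClosed_graph_odd h fun ν hν => ?_
      rw [finrank_comap_odd, (iso_finrank hν).2]
    rwa [finrank_comap_odd] at h1

end
end

section
/- Let μ and μ′ be superalgebra structure tensors of type (m,n), and suppose μ degenerates to μ′. For a structure tensor ν, let A(ν) denote ℂ^m ⊕ ℂ^n with the multiplication determined by ν, and define the powers A(ν)¹ = A(ν) and A(ν)^{k+1} = span of ⋃_{i=1}^{k} A(ν)^i·A(ν)^{k+1−i}; each A(ν)^k is a graded subspace. Then for every k ≥ 1: dim(A(μ)^k ∩ (ℂ^m ⊕ 0)) ≥ dim(A(μ′)^k ∩ (ℂ^m ⊕ 0)) and dim(A(μ)^k ∩ (0 ⊕ ℂ^n)) ≥ dim(A(μ′)^k ∩ (0 ⊕ ℂ^n)). -/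
noncomputable section

/-! ### Auxiliary development -/

open Submodule Set Module

/-- `mulOf` as a bilinear map. -/
def mulBil {m n : ℕ} (μ : Tensor m n) : GV m n →ₗ[ℂ] GV m n →ₗ[ℂ] GV m n :=
  LinearMap.mk₂ ℂ (mulOf μ)
    (by intro x x' y; unfold mulOf; refine Prod.ext (funext fun k => ?_) (funext fun k => ?_) <;>
        simp [add_mul, mul_add, Finset.sum_add_distrib] <;> ring)
    (by intro c x y; unfold mulOf; refine Prod.ext (funext fun k => ?_) (funext fun k => ?_) <;>
        · simp only [Prod.smul_fst, Prod.smul_snd, Pi.smul_apply, smul_eq_mul, mul_add,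
            Finset.mul_sum]
          congr 1 <;> exact Finset.sum_congr rfl fun _ _ => Finset.sum_congr rfl fun _ _ => by ring)
    (by intro x y y'; unfold mulOf; refine Prod.ext (funext fun k => ?_) (funext fun k => ?_) <;>
        simp [add_mul, mul_add, Finset.sum_add_distrib] <;> ring)
    (by intro c x y; unfold mulOf; refine Prod.ext (funext fun k => ?_) (funext fun k => ?_) <;>
        · simp only [Prod.smul_fst, Prod.smul_snd, Pi.smul_apply, smul_eq_mul, mul_add,
            Finset.mul_sum]
          congr 1 <;> exact Finset.sum_congr rfl fun _ _ => Finset.sum_congr rfl fun _ _ => by ring)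

@[simp] lemma mulBil_apply {m n : ℕ} (μ : Tensor m n) (x y : GV m n) :
    mulBil μ x y = mulOf μ x y := rfl

lemma continuous_mulOf {m n : ℕ} {P : Type*} [TopologicalSpace P]
    (f : P → Tensor m n) (a b : P → GV m n)
    (hf : Continuous f) (ha : Continuous a) (hb : Continuous b) :
    Continuous (fun p => mulOf (f p) (a p) (b p)) := by
  unfold mulOf
  apply Continuous.prodMk <;>
  · apply continuous_pi; intro k
    apply Continuous.add <;>
    · apply continuous_finset_sum; intro i _
      apply continuous_finset_sum; intro j _
      apply Continuous.mul; apply Continuous.mul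
      all_goals fun_prop

lemma mulSub_eq_map₂ {m n : ℕ} (μ : Tensor m n) (A B : Submodule ℂ (GV m n)) :
    mulSub μ A B = Submodule.map₂ (mulBil μ) A B := by
  rw [Submodule.map₂_eq_span_image2, mulSub]
  congr 1
  ext z
  simp only [Set.mem_setOf_eq, Set.mem_image2, mulBil_apply]
  constructor
  · rintro ⟨a, ha, b, hb, rfl⟩; exact ⟨a, ha, b, hb, rfl⟩
  · rintro ⟨a, ha, b, hb, rfl⟩; exact ⟨a, ha, b, hb, rfl⟩

lemma mulSub_span_span {m n : ℕ} (μ : Tensor m n) (s t : Set (GV m n)) :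
    mulSub μ (span ℂ s) (span ℂ t) = span ℂ (Set.image2 (mulOf μ) s t) := by
  rw [mulSub_eq_map₂, Submodule.map₂_span_span]
  rfl

lemma hom_mulOf {m n : ℕ} (μ : Tensor m n) (p q : Bool) (x y : GV m n)
    (hx : (p = false → x.2 = 0) ∧ (p = true → x.1 = 0))
    (hy : (q = false → y.2 = 0) ∧ (q = true → y.1 = 0)) :
    ((xor p q) = false → (mulOf μ x y).2 = 0) ∧ ((xor p q) = true → (mulOf μ x y).1 = 0) := by
  cases p <;> cases q <;> simp_all <;> unfold mulOf <;> funext k <;> simp [hx, hy]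

lemma span_base {m n : ℕ} :
    span ℂ (Set.range (Sum.elim (eps (m := m) (n := n)) ph)) = ⊤ := by
  have hb := ((Pi.basisFun ℂ (Fin m)).prod (Pi.basisFun ℂ (Fin n))).span_eq
  have he : (Sum.elim (eps (m := m) (n := n)) ph)
      = ⇑((Pi.basisFun ℂ (Fin m)).prod (Pi.basisFun ℂ (Fin n))) := by
    funext i
    cases i with
    | inl i =>
      refine Prod.ext ?_ ?_ <;>
        simp [eps, Basis.prod_apply_inl_fst, Basis.prod_apply_inl_snd, Pi.basisFun_apply]
    | inr j =>
      refine Prod.ext ?_ ?_ <;>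
        simp [ph, Basis.prod_apply_inr_fst, Basis.prod_apply_inr_snd, Pi.basisFun_apply]
  rw [he]; exact hb

lemma image2_range_eq {α β γ : Type*} {A B : Type*} (f : α → β → γ) (a : A → α) (b : B → β) :
    Set.image2 f (Set.range a) (Set.range b) = Set.range (fun p : A × B => f (a p.1) (b p.2)) := by
  ext z
  constructor
  · rintro ⟨x, ⟨i, rfl⟩, y, ⟨j, rfl⟩, rfl⟩; exact ⟨(i, j), rfl⟩
  · rintro ⟨⟨i, j⟩, rfl⟩; exact ⟨a i, ⟨i, rfl⟩, b j, ⟨j, rfl⟩, rfl⟩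

/-- For every `k` there is a fixed finite family of (continuous-in-`ν`)
homogeneous vectors spanning `powT ν k` for every `ν`. -/
lemma package {m n : ℕ} : ∀ k : ℕ,
    ∃ (ι : Type) (_ : Fintype ι) (g : Tensor m n → ι → GV m n) (par : ι → Bool),
      (∀ ν, powT ν k = span ℂ (Set.range (g ν))) ∧
      (∀ i, Continuous fun ν => g ν i) ∧
      (∀ ν i, (par i = false → (g ν i).2 = 0) ∧ (par i = true → (g ν i).1 = 0))
  | 0 =>
    ⟨Fin m ⊕ Fin n, inferInstance, fun _ => Sum.elim eps ph,
      Sum.elim (fun _ => false) (fun _ => true),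
      fun ν => by simp only [powT]; exact span_base.symm,
      fun i => continuous_const,
      fun ν i => by cases i <;> simp [eps, ph]⟩
  | 1 =>
    ⟨Fin m ⊕ Fin n, inferInstance, fun _ => Sum.elim eps ph,
      Sum.elim (fun _ => false) (fun _ => true),
      fun ν => by simp only [powT]; exact span_base.symm,
      fun i => continuous_const,
      fun ν i => by cases i <;> simp [eps, ph]⟩
  | (k + 2) => by
    have h1 := fun i : Fin (k + 1) => package (m := m) (n := n) ((i : ℕ) + 1)
    have h2 := fun i : Fin (k + 1) => package (m := m) (n := n) (k + 1 - (i : ℕ))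
    choose ι₁ f₁ g₁ p₁ hs₁ hc₁ hp₁ using h1
    choose ι₂ f₂ g₂ p₂ hs₂ hc₂ hp₂ using h2
    haveI := f₁; haveI := f₂
    refine ⟨Σ i : Fin (k + 1), ι₁ i × ι₂ i, inferInstance,
      fun ν x => mulOf ν (g₁ x.1 ν x.2.1) (g₂ x.1 ν x.2.2),
      fun x => xor (p₁ x.1 x.2.1) (p₂ x.1 x.2.2), ?_, ?_, ?_⟩
    · intro ν
      have : powT ν (k + 2)
          = ⨆ i : Fin (k + 1), mulSub ν (powT ν ((i : ℕ) + 1)) (powT ν (k + 1 - (i : ℕ))) := by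
        simp [powT]
      rw [this]
      rw [Set.range_sigma_eq_iUnion_range, Submodule.span_iUnion]
      refine iSup_congr fun i => ?_
      rw [hs₁ i ν, hs₂ i ν, mulSub_span_span, image2_range_eq]
    · rintro ⟨i, a, b⟩
      exact continuous_mulOf id _ _ continuous_id (hc₁ i a) (hc₂ i b)
    · rintro ν ⟨i, a, b⟩
      exact hom_mulOf ν _ _ _ _ (hp₁ i ν a) (hp₂ i ν b)
  termination_by k => k
  decreasing_by
  · have := i.isLt; omega
  · omega

section Semicont

variable {V : Type*} [AddCommGroup V] [Module ℂ V] [FiniteDimensional ℂ V]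

lemma rank_ge_iff {ι : Type*} [Fintype ι] (g : ι → V) (d : ℕ) :
    d ≤ finrank ℂ (span ℂ (Set.range g)) ↔ ∃ j : Fin d → ι, LinearIndependent ℂ (g ∘ j) := by
  constructor
  · intro hd
    obtain ⟨t, hts, hsp, hli⟩ := exists_linearIndependent ℂ (Set.range g)
    have htfin : t.Finite := (Set.finite_range g).subset hts
    haveI : Fintype t := htfin.fintype
    have hcard : finrank ℂ (span ℂ (Set.range g)) = t.toFinset.card := by
      rw [← hsp]; exact finrank_span_set_eq_card hli
    have hdt : d ≤ Fintype.card t := by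
      rw [Set.toFinset_card] at hcard; omega
    obtain ⟨e⟩ := Function.Embedding.nonempty_of_card_le
      (α := Fin d) (β := t) (by simpa using hdt)
    have hv : LinearIndependent ℂ (fun a : Fin d => ((e a : t) : V)) :=
      hli.comp e e.injective
    have hmem : ∀ a : Fin d, ((e a : t) : V) ∈ Set.range g := fun a => hts (e a).2
    choose j hj using hmem
    refine ⟨j, ?_⟩
    have hgj : g ∘ j = fun a : Fin d => ((e a : t) : V) := funext fun a => hj a
    rw [hgj]; exact hv
  · rintro ⟨j, hj⟩
    have h1 : finrank ℂ (span ℂ (Set.range (g ∘ j))) = d := by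
      simpa using finrank_span_eq_card hj
    have h2 : span ℂ (Set.range (g ∘ j)) ≤ span ℂ (Set.range g) :=
      span_mono (Set.range_comp_subset_range j g)
    calc d = finrank ℂ (span ℂ (Set.range (g ∘ j))) := h1.symm
    _ ≤ finrank ℂ (span ℂ (Set.range g)) := Submodule.finrank_mono h2

end Semicont

lemma isOpen_rank_ge {P : Type*} [TopologicalSpace P] {ι : Type*} [Fintype ι]
    {W : Type*} [NormedAddCommGroup W] [NormedSpace ℂ W] [FiniteDimensional ℂ W]
    (g : P → ι → W) (hc : ∀ i, Continuous fun p => g p i) (d : ℕ) :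
    IsOpen {p | d ≤ finrank ℂ (span ℂ (Set.range (g p)))} := by
  have : {p | d ≤ finrank ℂ (span ℂ (Set.range (g p)))}
      = ⋃ j : Fin d → ι, {p | LinearIndependent ℂ (g p ∘ j)} := by
    ext p; simp [rank_ge_iff, Set.mem_iUnion]
  rw [this]
  refine isOpen_iUnion fun j => ?_
  have hset : {p | LinearIndependent ℂ (g p ∘ j)}
      = (fun p => (fun b => g p (j b))) ⁻¹' {f : Fin d → W | LinearIndependent ℂ f} := by
    ext p; simp only [Set.mem_setOf_eq, Set.mem_preimage, Function.comp_def]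
  rw [hset]
  exact (isOpen_setOf_linearIndependent).preimage (continuous_pi fun b => hc (j b))

lemma span_inf_gen {m n : ℕ} {ι : Type*} (g : ι → GV m n) (W : Submodule ℂ (GV m n))
    (Pr : GV m n →ₗ[ℂ] GV m n) (hPW : ∀ x, Pr x ∈ W) (hWP : ∀ x ∈ W, Pr x = x)
    (s : Set ι) (hs : ∀ i ∈ s, Pr (g i) = g i) (hs' : ∀ i ∉ s, Pr (g i) = 0) :
    span ℂ (Set.range g) ⊓ W = span ℂ (g '' s) := by
  apply le_antisymm
  · rintro x ⟨hx1, hx2⟩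
    have hPx : Pr x = x := hWP x hx2
    have hmem : Pr x ∈ Submodule.map Pr (span ℂ (Set.range g)) := Submodule.mem_map_of_mem hx1
    rw [Submodule.map_span] at hmem
    rw [← hPx]
    refine span_le.mpr ?_ hmem
    rintro z ⟨w, ⟨i, rfl⟩, rfl⟩
    by_cases hi : i ∈ s
    · rw [hs i hi]; exact subset_span ⟨i, hi, rfl⟩
    · rw [hs' i hi]; exact Submodule.zero_mem _
  · refine le_inf ?_ ?_
    · exact span_mono (Set.image_subset_range g s) |>.trans le_rfl
    · rw [span_le]
      rintro z ⟨i, hi, rfl⟩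
      rw [← hs i hi]; exact hPW _

lemma iso_finrank {m n : ℕ} {μ ν : Tensor m n} (h : Iso μ ν) (k : ℕ)
    (W : Submodule ℂ (Fin m → ℂ)) (W' : Submodule ℂ (Fin n → ℂ))
    (hW : W = ⊤ ∨ W = ⊥) (hW' : W' = ⊤ ∨ W' = ⊥) :
    finrank ℂ ↥(powT ν k ⊓ Submodule.prod W W')
      = finrank ℂ ↥(powT μ k ⊓ Submodule.prod W W') := by
  obtain ⟨T, S, hTS⟩ := h
  set L : GV m n ≃ₗ[ℂ] GV m n := T.prodCongr S with hLdef
  have hL : ∀ x : GV m n, L x = (T x.1, S x.2) := fun x => rfl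
  have hmul : ∀ x y, L (mulOf μ x y) = mulOf ν (L x) (L y) := fun x y => hTS x y
  have hmulSub : ∀ A B : Submodule ℂ (GV m n),
      Submodule.map (L : GV m n →ₗ[ℂ] GV m n) (mulSub μ A B)
        = mulSub ν (Submodule.map (L : GV m n →ₗ[ℂ] GV m n) A)
            (Submodule.map (L : GV m n →ₗ[ℂ] GV m n) B) := by
    intro A B
    rw [mulSub, mulSub, Submodule.map_span]
    congr 1
    ext z
    constructor
    · rintro ⟨w, ⟨a, ha, b, hb, rfl⟩, rfl⟩
      exact ⟨L a, Submodule.mem_map_of_mem ha, L b, Submodule.mem_map_of_mem hb, hmul a b⟩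
    · rintro ⟨a', ⟨a, ha, rfl⟩, b', ⟨b, hb, rfl⟩, rfl⟩
      exact ⟨mulOf μ a b, ⟨a, ha, b, hb, rfl⟩, hmul a b⟩
  have hpow : ∀ j, Submodule.map (L : GV m n →ₗ[ℂ] GV m n) (powT μ j) = powT ν j := by
    intro j
    induction j using Nat.strong_induction_on with
    | _ j IH =>
      rcases j with _ | _ | j
      · simp only [powT, Submodule.map_top, LinearEquiv.range]
      · show Submodule.map (L : GV m n →ₗ[ℂ] GV m n) (powT μ 1) = powT ν 1
        simp only [powT, Submodule.map_top, LinearEquiv.range]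
      · have e1 : powT μ (j + 2)
            = ⨆ i : Fin (j + 1), mulSub μ (powT μ ((i : ℕ) + 1)) (powT μ (j + 1 - (i : ℕ))) := by
          simp [powT]
        have e2 : powT ν (j + 2)
            = ⨆ i : Fin (j + 1), mulSub ν (powT ν ((i : ℕ) + 1)) (powT ν (j + 1 - (i : ℕ))) := by
          simp [powT]
        rw [e1, e2, Submodule.map_iSup]
        refine iSup_congr fun i => ?_
        rw [hmulSub, IH ((i : ℕ) + 1) (by have := i.isLt; omega), IH (j + 1 - (i : ℕ)) (by omega)]
  have hprod : Submodule.map (L : GV m n →ₗ[ℂ] GV m n) (Submodule.prod W W')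
      = Submodule.prod W W' := by
    apply le_antisymm
    · rintro x ⟨y, ⟨hy1, hy2⟩, rfl⟩
      rcases hW with rfl | rfl <;> rcases hW' with rfl | rfl <;>
        refine ⟨?_, ?_⟩ <;>
        simp_all [hL, Submodule.mem_bot]
    · rintro x ⟨hx1, hx2⟩
      refine ⟨L.symm x, ⟨?_, ?_⟩, L.apply_symm_apply x⟩ <;>
      · have hsymm : L.symm x = (T.symm x.1, S.symm x.2) := rfl
        rcases hW with rfl | rfl <;> rcases hW' with rfl | rfl <;>
          simp_all [hsymm, Submodule.mem_bot]
  calc finrank ℂ ↥(powT ν k ⊓ Submodule.prod W W')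
      = finrank ℂ ↥((Submodule.map (L : GV m n →ₗ[ℂ] GV m n) (powT μ k))
          ⊓ Submodule.map (L : GV m n →ₗ[ℂ] GV m n) (Submodule.prod W W')) := by
        rw [hpow, hprod]
    _ = finrank ℂ ↥(Submodule.map (L : GV m n →ₗ[ℂ] GV m n) (powT μ k ⊓ Submodule.prod W W')) := by
        rw [Submodule.map_inf (L : GV m n →ₗ[ℂ] GV m n) L.injective]
    _ = finrank ℂ ↥(powT μ k ⊓ Submodule.prod W W') := LinearEquiv.finrank_map_eq L _

/-- The even projection. -/
def projE (m n : ℕ) : GV m n →ₗ[ℂ] GV m n := (LinearMap.fst ℂ _ _).prod 0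
/-- The odd projection. -/
def projO (m n : ℕ) : GV m n →ₗ[ℂ] GV m n :=
  (0 : GV m n →ₗ[ℂ] (Fin m → ℂ)).prod (LinearMap.snd ℂ _ _)

/-- degeneration does not increase the graded dimensions of the
powers `J^k`. -/
theorem stmt16 {m n : ℕ} (μ μ' : Tensor m n) (h : degenerates μ μ') :
    ∀ k : ℕ, 1 ≤ k →
      Module.finrank ℂ
          ↥(powT μ' k ⊓ Submodule.prod (⊤ : Submodule ℂ (Fin m → ℂ)) (⊥ : Submodule ℂ (Fin n → ℂ)))
        ≤ Module.finrank ℂ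
          ↥(powT μ k ⊓ Submodule.prod (⊤ : Submodule ℂ (Fin m → ℂ)) (⊥ : Submodule ℂ (Fin n → ℂ))) ∧
      Module.finrank ℂ
          ↥(powT μ' k ⊓ Submodule.prod (⊥ : Submodule ℂ (Fin m → ℂ)) (⊤ : Submodule ℂ (Fin n → ℂ)))
        ≤ Module.finrank ℂ
          ↥(powT μ k ⊓ Submodule.prod (⊥ : Submodule ℂ (Fin m → ℂ)) (⊤ : Submodule ℂ (Fin n → ℂ))) := by
  intro k hk
  obtain ⟨ι, fι, g, par, hspan, hcont, hpar⟩ := package (m := m) (n := n) k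
  haveI := fι
  have key : ∀ (W : Submodule ℂ (Fin m → ℂ)) (W' : Submodule ℂ (Fin n → ℂ))
      (hW : W = ⊤ ∨ W = ⊥) (hW' : W' = ⊤ ∨ W' = ⊥)
      (Pr : GV m n →ₗ[ℂ] GV m n) (hPW : ∀ x, Pr x ∈ Submodule.prod W W')
      (hWP : ∀ x ∈ Submodule.prod W W', Pr x = x)
      (b : Bool) (hb : ∀ ν i, par i = b → Pr (g ν i) = g ν i)
      (hb' : ∀ ν i, par i ≠ b → Pr (g ν i) = 0),
      Module.finrank ℂ ↥(powT μ' k ⊓ Submodule.prod W W')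
        ≤ Module.finrank ℂ ↥(powT μ k ⊓ Submodule.prod W W') := by
    intro W W' hW hW' Pr hPW hWP b hb hb'
    have hinf : ∀ ν : Tensor m n, powT ν k ⊓ Submodule.prod W W'
        = Submodule.span ℂ (Set.range (fun i : {i : ι // par i = b} => g ν i)) := by
      intro ν
      rw [hspan ν, span_inf_gen (g ν) _ Pr hPW hWP {i | par i = b}
        (fun i hi => hb ν i hi) (fun i hi => hb' ν i hi)]
      rw [Set.image_eq_range]; rfl
    set d := Module.finrank ℂ ↥(powT μ' k ⊓ Submodule.prod W W') with hd
    haveI : DecidablePred fun i : ι => par i = b := fun i => instDecidableEqBool _ _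
    have hopen : IsOpen {ν : Tensor m n |
        d ≤ Module.finrank ℂ
          (Submodule.span ℂ (Set.range (fun i : {i : ι // par i = b} => g ν i)))} :=
      isOpen_rank_ge (fun ν (i : {i : ι // par i = b}) => g ν i) (fun i => hcont i) d
    have hmem : μ' ∈ {ν : Tensor m n |
        d ≤ Module.finrank ℂ
          (Submodule.span ℂ (Set.range (fun i : {i : ι // par i = b} => g ν i)))} := by
      show d ≤ _
      rw [← hinf μ']
    obtain ⟨ν, hνU, hνS⟩ := mem_closure_iff.mp h _ hopen hmem
    have h1 : d ≤ Module.finrank ℂ ↥(powT ν k ⊓ Submodule.prod W W') := by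
      rw [hinf ν]; exact hνU
    have h2 : Module.finrank ℂ ↥(powT ν k ⊓ Submodule.prod W W')
        = Module.finrank ℂ ↥(powT μ k ⊓ Submodule.prod W W') := iso_finrank hνS k W W' hW hW'
    omega
  constructor
  · refine key ⊤ ⊥ (Or.inl rfl) (Or.inr rfl) (projE m n)
      (fun x => ⟨trivial, rfl⟩)
      (fun x hx => ?_) false (fun ν i hi => ?_) (fun ν i hi => ?_)
    · obtain ⟨-, hx2⟩ := hx
      have hz : x.2 = 0 := hx2
      exact Prod.ext rfl hz.symm
    · have h2 : (g ν i).2 = 0 := (hpar ν i).1 hi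
      exact Prod.ext rfl h2.symm
    · have hi' : par i = true := by revert hi; cases par i <;> simp
      have h1 : (g ν i).1 = 0 := (hpar ν i).2 hi'
      exact Prod.ext h1 rfl
  · refine key ⊥ ⊤ (Or.inr rfl) (Or.inl rfl) (projO m n)
      (fun x => ⟨rfl, trivial⟩)
      (fun x hx => ?_) true (fun ν i hi => ?_) (fun ν i hi => ?_)
    · obtain ⟨hx1, -⟩ := hx
      have hz : x.1 = 0 := hx1
      exact Prod.ext hz.symm rfl
    · have h1 : (g ν i).1 = 0 := (hpar ν i).2 hi
      exact Prod.ext h1.symm rfl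
    · have hi' : par i = false := by revert hi; cases par i <;> simp
      have h2 : (g ν i).2 = 0 := (hpar ν i).1 hi'
      exact Prod.ext rfl h2

end
end

section
/- For λ ∈ ℂ∖{0}, let μ^λ be the superalgebra structure tensor of type (2,3) with, in the standard homogeneous basis {e₁, e₂; f₁, f₂, f₃} of ℂ² ⊕ ℂ³, nonzero products e₁² = e₂, e₁f₂ = f₂e₁ = f₁, f₁f₃ = −f₃f₁ = λe₂, f₂f₃ = −f₃f₂ = e₁ (all other products of basis vectors zero), and let ν be the tensor with nonzero products e₁f₂ = f₂e₁ = f₁, f₁f₃ = −f₃f₁ = e₂, f₂f₃ = −f₃f₂ = e₁. Then ν lies in the closure, in the standard topology on the space of structure tensors of type (2,3), of the union over λ ∈ ℂ∖{0} of the G-orbits of μ^λ, where G = GL₂(ℂ) × GL₃(ℂ) acts by base change. (In the paper's notation: (2,3)₃₁^λ degenerates to (2,3)₁₀.) -/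
noncomputable section

/-- The superalgebra `(2,3)₁₀`: `e₁f₂ = f₁`, `f₁f₃ = e₂`, `f₂f₃ = e₁`. -/
def A10 : Tensor 2 3 := T23 0 P21 0 W23 W13

/-!
Rescaling `e₂ ↦ t e₂` (with `t ≠ 0`) carries `μ^{1/t}` to the tensor with `e₁² = t e₂`,
`f₁f₃ = e₂` and the other products of `μ^{1/t}` unchanged. This curve is continuous in `t`
and equals `ν` at `t = 0`, so `ν` lies in the closure of its values at `t ≠ 0`.
-/

def evenRescale (t : ℂ) (ht : t ≠ 0) : (Fin 2 → ℂ) ≃ₗ[ℂ] (Fin 2 → ℂ) :=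
  LinearEquiv.piCongrRight fun i =>
    LinearEquiv.smulOfNeZero ℂ ℂ (if i = 1 then t else 1) (by split_ifs <;> simp [ht])

lemma evenRescale_apply (t : ℂ) (ht : t ≠ 0) (v : Fin 2 → ℂ) (i : Fin 2) :
    evenRescale t ht v i = (if i = 1 then t else 1) * v i :=
  rfl

lemma iso_T23_evenRescale (a : ℂ) (R1 R2 W Θ : Fin 3 → Fin 3 → ℂ) (t : ℂ) (ht : t ≠ 0) :
    Iso (T23 a R1 R2 W Θ) (T23 (t * a) R1 (t⁻¹ • R2) W (t • Θ)) := by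
  refine ⟨evenRescale t ht, LinearEquiv.refl ℂ _, fun x y =>
    Prod.ext (funext fun k => ?_) (funext fun k => ?_)⟩
  · fin_cases k <;> simp [mulOf, T23, evenRescale_apply, Fin.sum_univ_succ]
    ring
  · simp [mulOf, T23, evenRescale_apply, Fin.sum_univ_succ]
    field_simp

lemma continuous_T23 (R1 R2 W Θ : Fin 3 → Fin 3 → ℂ) :
    Continuous fun a : ℂ => T23 a R1 R2 W Θ := by
  refine .prodMk (continuous_pi fun i => continuous_pi fun j => continuous_pi fun k => ?_)
    continuous_const
  split_ifs
  exacts [continuous_id, continuous_const]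

/-- the family `(2,3)₃₁^λ` degenerates to `(2,3)₁₀`: the latter lies in
the closure of the union of the orbits of the former. -/
theorem stmt18 :
    A10 ∈ closure {ρ : Tensor 2 3 | ∃ l : ℂ, l ≠ 0 ∧ Iso (A31 l) ρ} := by
  have hlim : A10 ∈ closure ((fun t => T23 t P21 0 W23 W13) '' {0}ᶜ) :=
    mem_closure_image (continuous_T23 P21 0 W23 W13).continuousAt (by simp)
  refine closure_mono ?_ hlim
  rintro _ ⟨t, ht, rfl⟩
  refine ⟨t⁻¹, inv_ne_zero ht, ?_⟩
  simpa [A31, smul_smul, mul_inv_cancel₀ ht] using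
    iso_T23_evenRescale 1 P21 0 W23 (t⁻¹ • W13) t ht

end
end

section
/- For φ ∈ ℂ, let μ^φ be the superalgebra structure tensor of type (2,3) with, in the standard homogeneous basis {e₁, e₂; f₁, f₂, f₃} of ℂ² ⊕ ℂ³, nonzero products e₁² = e₂, e₁f₂ = f₂e₁ = f₃, e₁f₃ = f₃e₁ = φf₁, e₂f₂ = f₂e₂ = f₁, f₂f₃ = −f₃f₂ = e₂ (all other products of basis vectors zero), and for γ ∈ ℂ∖{0} let ν^γ be the tensor with nonzero products e₁² = e₂, e₁f₂ = f₂e₁ = f₃, e₁f₃ = f₃e₁ = γf₁, e₂f₂ = f₂e₂ = f₁. Then for every γ ∈ ℂ∖{0}, the tensor ν^γ lies in the closure, in the standard topology on the space of structure tensors of type (2,3), of the union over φ ∈ ℂ of the G-orbits of μ^φ, where G = GL₂(ℂ) × GL₃(ℂ) acts by base change. (In the paper's notation: (2,3)₄₄^φ degenerates to (2,3)₄₃^γ.) -/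
noncomputable section

/-! Rescaling the odd part by `s⁻¹` multiplies the odd·odd structure constants by `s²` and
leaves the others unchanged, so letting `s → 0` every superalgebra degenerates to the one
with odd·odd products set to zero. For `(2,3)₄₄^γ` that algebra is `(2,3)₄₃^γ`. -/

theorem iso_sq_smul_oddMul {m n : ℕ} (μ : Tensor m n) {s : ℂ} (hs : s ≠ 0) :
    Iso μ (μ.1, μ.2.1, s ^ 2 • μ.2.2) := by
  let S := LinearEquiv.smulOfNeZero ℂ (Fin n → ℂ) s⁻¹ (inv_ne_zero hs)
  have hS : ∀ v, S v = s⁻¹ • v := fun _ => rfl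
  refine ⟨LinearEquiv.refl ℂ _, S, fun x y => ?_⟩
  ext k
  · simp only [mulOf, hS, LinearEquiv.refl_apply, Pi.smul_apply, smul_eq_mul]
    congr 1
    refine Finset.sum_congr rfl fun i _ => Finset.sum_congr rfl fun j _ => ?_
    field_simp
  · simp only [mulOf, hS, LinearEquiv.refl_apply, Pi.smul_apply, smul_eq_mul, mul_add,
      Finset.mul_sum]
    congr 1 <;> refine Finset.sum_congr rfl fun i _ => Finset.sum_congr rfl fun j _ => ?_ <;>
      ring

theorem degenerates_zero_oddMul {m n : ℕ} (μ : Tensor m n) :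
    degenerates μ (μ.1, μ.2.1, 0) := by
  have hlim : Filter.Tendsto (fun s : ℂ => ((μ.1, μ.2.1, s ^ 2 • μ.2.2) : Tensor m n))
      (nhdsWithin 0 {0}ᶜ) (nhds (μ.1, μ.2.1, 0)) := by
    have hcont : Continuous (fun s : ℂ => ((μ.1, μ.2.1, s ^ 2 • μ.2.2) : Tensor m n)) := by
      fun_prop
    simpa using (hcont.tendsto 0).mono_left nhdsWithin_le_nhds
  refine mem_closure_of_tendsto hlim ?_
  filter_upwards [self_mem_nhdsWithin] with s hs
  exact iso_sq_smul_oddMul μ hs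

theorem A44_zero_oddMul (g : ℂ) : ((A44 g).1, (A44 g).2.1, 0) = A43 g := by
  simp only [A43, A44, T23, Pi.zero_apply, ite_self]
  rfl

theorem stmt19_general (g : ℂ) :
    A43 g ∈ closure {ρ : Tensor 2 3 | ∃ p : ℂ, Iso (A44 p) ρ} := by
  rw [← A44_zero_oddMul]
  refine closure_mono ?_ (degenerates_zero_oddMul (A44 g))
  exact fun ρ hρ => ⟨g, hρ⟩

/-- the family `(2,3)₄₄^φ` degenerates to each `(2,3)₄₃^γ`, `γ ≠ 0`. -/
theorem stmt19 (g : ℂ) (hg : g ≠ 0) :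
    A43 g ∈ closure {ρ : Tensor 2 3 | ∃ p : ℂ, Iso (A44 p) ρ} :=
  stmt19_general g

end
end
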